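/- The degree of the degeneracy locus X of a general morphism O^{⊕m} → Ω_{Pⁿ}(2) equals the alternating sum ∑_{i=0}^{n-m+1} (-1)^i · binom(n-i, m-1). -/
import Mathlib

open Finset

private def Fdeg (n k : ℕ) : ℤ := ∑ i ∈ range (k+1), (-2)^i * ((n+1).choose (k-i) : ℤ)
private def Gdeg (n k : ℕ) : ℤ := ∑ i ∈ range (k+1), (-1)^i * ((n-i).choose (k-i) : ℤ)

private lemma Fdeg_succ (n k : ℕ) :
    Fdeg n (k+1) = ((n+1).choose (k+1) : ℤ) - 2 * Fdeg n k := by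
  rw [Fdeg, Fdeg, Finset.sum_range_succ', Finset.mul_sum]
  simp only [Nat.succ_sub_succ, pow_succ, pow_zero, one_mul, Nat.sub_zero]
  have : ∀ i ∈ range (k+1), (-2:ℤ)^i * (-2) * ((n+1).choose (k-i) : ℤ)
      = -(2 * ((-2:ℤ)^i * ((n+1).choose (k-i) : ℤ))) := by intros; ring
  rw [Finset.sum_congr rfl this, Finset.sum_neg_distrib]
  ring

private lemma Gdeg_peel (n k : ℕ) :
    Gdeg n (k+1) = (n.choose (k+1) : ℤ) - Gdeg (n-1) k := by
  rw [Gdeg, Gdeg, Finset.sum_range_succ']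
  simp only [Nat.succ_sub_succ, pow_succ, pow_zero, one_mul, Nat.sub_zero]
  have : ∀ i ∈ range (k+1), (-1:ℤ)^i * (-1) * ((n-(i+1)).choose (k-i) : ℤ)
      = -((-1:ℤ)^i * ((n-1-i).choose (k-i) : ℤ)) := by
    intro i _
    have : n - (i+1) = n - 1 - i := by omega
    rw [this]; ring
  rw [Finset.sum_congr rfl this, Finset.sum_neg_distrib]
  ring

private lemma Gdeg_pascal (n k : ℕ) (h : k + 1 ≤ n) :
    Gdeg n (k+1) = Gdeg (n-1) (k+1) + Gdeg (n-1) k := by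
  rw [Gdeg, Gdeg, Gdeg, Finset.sum_range_succ, Finset.sum_range_succ (n := k+1)]
  have h1 : n - (k+1) ≥ 0 := by omega
  have e1 : ((n-(k+1)).choose (k+1-(k+1)) : ℤ) = 1 := by
    simp [Nat.sub_self]
  have e2 : ((n-1-(k+1)).choose (k+1-(k+1)) : ℤ) = 1 := by
    simp [Nat.sub_self]
  rw [e1, e2]
  have : ∀ i ∈ range (k+1), (-1:ℤ)^i * ((n-i).choose (k+1-i) : ℤ)
      = (-1:ℤ)^i * ((n-1-i).choose (k+1-i) : ℤ)
        + (-1:ℤ)^i * ((n-1-i).choose (k-i) : ℤ) := by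
    intro i hi
    rw [Finset.mem_range] at hi
    have hn : n - i = (n - 1 - i) + 1 := by omega
    have hk : k + 1 - i = (k - i) + 1 := by omega
    rw [hn, hk, Nat.choose_succ_succ]
    push_cast
    ring
  rw [Finset.sum_congr rfl this, Finset.sum_add_distrib]
  ring

private lemma Gdeg_key (n k : ℕ) (h : k + 1 ≤ n) :
    Gdeg n (k+1) + 2 * Gdeg n k = ((n+1).choose (k+1) : ℤ) := by
  cases k with
  | zero =>
    have h0 : Gdeg n 0 = 1 := by simp [Gdeg]
    have h1 : Gdeg (n-1) 0 = 1 := by simp [Gdeg]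
    rw [Gdeg_peel, h0, h1]
    simp [Nat.choose_one_right]
    omega
  | succ j =>
    have e1 := Gdeg_peel n (j+1)
    have e2 := Gdeg_pascal n j (by omega)
    have e3 := Gdeg_peel n j
    have e4 : ((n+1).choose (j+2) : ℤ) = (n.choose (j+1) : ℤ) + (n.choose (j+2) : ℤ) := by
      rw [Nat.choose_succ_succ (n := n) (k := j+1)]
      push_cast; ring
    linarith

private lemma FG_eq (n k : ℕ) (h : k ≤ n) : Fdeg n k = Gdeg n k := by
  induction k with
  | zero => simp [Fdeg, Gdeg]
  | succ j ih =>
    have hj : j ≤ n := by omega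
    rw [Fdeg_succ, ih hj]
    have := Gdeg_key n j h
    linarith

open Finset in
/-- The degree of the degeneracy locus `X` of a general morphism
`O^{⊕m} → Ω_{ℙⁿ}(2)` is the top Chern class `c_{n-m+1}(coker φ)`, which (from the Euler
sequence, `c(coker φ) = c(Ω_{ℙⁿ}(2)) = (1+h)^{n+1}/(1+2h)`) is the integer
`∑ (-2)^i · C(n+1, n-m+1-i)`.  The statement is that this degree equals the alternating sum
`∑_{i=0}^{n-m+1} (-1)^i · C(n-i, m-1)`. -/
theorem degree_degeneracy_locus (n m : ℕ) (hm : 1 ≤ m) (hmn : m ≤ n) :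
    (∑ i ∈ range (n - m + 2), (-2 : ℤ) ^ i * (n + 1).choose (n - m + 1 - i)) =
      ∑ i ∈ range (n - m + 2), (-1 : ℤ) ^ i * (n - i).choose (m - 1) := by
  have h1 : n - m + 1 ≤ n := by omega
  have key := FG_eq n (n - m + 1) h1
  have lhs : (∑ i ∈ range (n - m + 2), (-2 : ℤ) ^ i * (n + 1).choose (n - m + 1 - i))
      = Fdeg n (n - m + 1) := rfl
  have rhs : Gdeg n (n - m + 1)
      = ∑ i ∈ range (n - m + 2), (-1 : ℤ) ^ i * (n - i).choose (m - 1) := by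
    rw [Gdeg]
    apply Finset.sum_congr
    · congr 1
    · intro i hi
      rw [Finset.mem_range] at hi
      congr 2
      have e : n - m + 1 - i = (n - i) - (m - 1) := by omega
      rw [e, Nat.choose_symm (by omega)]
  rw [lhs, key, rhs]
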